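/- Let ψ: ℝ → ℂ satisfy: (a) |ψ(x)| ≤ Φ_ψ(|x|) where Φ_ψ: [0,∞) → ℝ is decreasing with Φ_ψ(0) < ∞ and compact support [−â, â]; (b) ψ(x) = (1/2π) ∫_ℝ e^{ixu} ψ̂(u) du with ∫_ℝ ln^α(1+|u|) |ψ̂(u)| du < ∞ for some α > 0. Then for all γ ∈ (0,1), x, y ∈ ℝ, and j ∈ ℕ₀: Σ_{k∈ℤ} |ψ_{jk}(x) − ψ_{jk}(y)| ≤ 2^{j/2 + 1} · R_α^{1−γ} · L_γ · max(1, j^{α(1−γ)}) · (ln(e^α + 1/|x−y|))^{−α(1−γ)}, where R_α = (1/π) ∫_ℝ ln^α(e^α + |u| + 2) |ψ̂(u)| du and L_γ = 3 Φ_ψ(0)^γ + 4 ∫_{1/2}^{â} Φ_ψ(t)^γ dt for â > 1/2 (and L_γ = 3 Φ_ψ(0)^γ for â < 1/2). -/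

import Mathlib

/-!
An increment `ψ u - ψ v` is bounded in two ways. Through the Fourier representation it is at most
`(1/2π) ∫ min (2, |t| |u - v|) |ψ̂ t| dt`, and for `u - v = 2^j (x - y)` the logarithmic moment of
`ψ̂` turns this into `R_α max(1, j)^α ln^{-α}(e^α + 1/|x - y|)`: when `|t| 2^j |x - y|` is large the
bound `2` wins, otherwise the growth of `(e^s - e^α) / s^α` controls the ratio of logarithms.
It is also at most `Φ_ψ(|u|) + Φ_ψ(|v|)`. Interpolating the two bounds with weights `1 - γ` and
`γ` leaves `Φ_ψ^γ`, whose lattice sums `Σ_k Φ_ψ^γ(|w - k|)` are compared with `∫ Φ_ψ^γ`.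
-/

open MeasureTheory Set

/-- `ψ_{jk}(x) = 2^{j/2} ψ(2^j x - k)`. -/
noncomputable def scaledW (ψ : ℝ → ℂ) (j : ℕ) (k : ℤ) (x : ℝ) : ℂ :=
  (((2 : ℝ) ^ ((j : ℝ) / 2) : ℝ) : ℂ) * ψ ((2 : ℝ) ^ j * x - (k : ℝ))

noncomputable def invFourier (g : ℝ → ℂ) (x : ℝ) : ℂ :=
  ((1 / (2 * Real.pi) : ℝ) : ℂ) * ∫ u : ℝ, Complex.exp (Complex.I * u * x) * g u

lemma Complex.norm_exp_I_mul_sub_exp_I_mul_le (t u v : ℝ) :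
    ‖Complex.exp (Complex.I * t * u) - Complex.exp (Complex.I * t * v)‖ ≤
      min 2 (|t| * |u - v|) := by
  have hfac : Complex.exp (Complex.I * t * u) - Complex.exp (Complex.I * t * v) =
      Complex.exp (Complex.I * ↑(t * v)) * (Complex.exp (Complex.I * ↑(t * (u - v))) - 1) := by
    rw [mul_sub, ← Complex.exp_add, mul_one]; push_cast; ring_nf
  rw [hfac, norm_mul, Complex.norm_exp_I_mul_ofReal, one_mul]
  refine le_min ?_ ?_
  · exact (norm_sub_le _ _).trans (by rw [Complex.norm_exp_I_mul_ofReal, norm_one]; norm_num)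
  · simpa [abs_mul] using Real.norm_exp_I_mul_ofReal_sub_one_le (x := t * (u - v))

lemma integrable_cexp_I_mul_mul_iff {g : ℝ → ℂ} (x : ℝ) :
    Integrable (fun u : ℝ => Complex.exp (Complex.I * u * x) * g u) ↔ Integrable g := by
  have hmeas : ∀ c : ℝ, AEStronglyMeasurable (fun u : ℝ => Complex.exp (Complex.I * u * c)) :=
    fun c => by fun_prop
  have hnorm : ∀ c u : ℝ, ‖Complex.exp (Complex.I * u * c)‖ = 1 := fun c u => by
    simpa [mul_assoc] using Complex.norm_exp_I_mul_ofReal (u * c)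
  refine ⟨fun h => ?_, fun h => h.bdd_mul (hmeas x) (.of_forall fun u => (hnorm x u).le)⟩
  convert h.bdd_mul (hmeas (-x)) (.of_forall fun u => (hnorm (-x) u).le) using 1
  ext u
  rw [← mul_assoc, ← Complex.exp_add]
  push_cast; ring_nf; simp

lemma invFourier_eq_zero_of_not_integrable {g : ℝ → ℂ} (hg : ¬Integrable g) (x : ℝ) :
    invFourier g x = 0 := by
  rw [invFourier, integral_undef (mt (integrable_cexp_I_mul_mul_iff x).1 hg), mul_zero]

lemma norm_invFourier_sub_le {g : ℝ → ℂ} (hg : Integrable g) (u v : ℝ) :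
    ‖invFourier g u - invFourier g v‖ ≤
      1 / (2 * Real.pi) * ∫ t : ℝ, min 2 (|t| * |u - v|) * ‖g t‖ := by
  have hint := fun x => (integrable_cexp_I_mul_mul_iff (g := g) x).2 hg
  rw [invFourier, invFourier, ← mul_sub, ← integral_sub (hint u) (hint v), norm_mul,
    Complex.norm_real, Real.norm_of_nonneg (by positivity)]
  gcongr
  refine norm_integral_le_of_norm_le ?_ (.of_forall fun t => ?_)
  · refine (hg.norm.const_mul 2).mono' (by fun_prop) (.of_forall fun t => ?_)
    rw [norm_mul, Real.norm_of_nonneg (le_min zero_le_two (by positivity)), norm_norm]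
    gcongr
    exact min_le_left _ _
  · rw [← sub_mul, norm_mul]
    gcongr
    exact Complex.norm_exp_I_mul_sub_exp_I_mul_le t u v

/-- That is, `s ↦ (exp s - exp α) / s ^ α` is monotone on `[α, ∞)`. -/
lemma rpow_mul_exp_sub_exp_le {α b L : ℝ} (hα : 0 < α) (hb : α ≤ b) (hL : b ≤ L) :
    L ^ α * (Real.exp b - Real.exp α) ≤ b ^ α * (Real.exp L - Real.exp α) := by
  have hb0 : 0 < b := hα.trans_le hb
  have hpow : L ^ α ≤ b ^ α * Real.exp (L - b) := by
    have hLb : 0 ≤ L / b := div_nonneg (hb0.le.trans hL) hb0.le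
    have hq : 0 ≤ L / b - 1 := by rw [sub_nonneg, one_le_div hb0]; exact hL
    calc L ^ α = b ^ α * (L / b) ^ α := by
          rw [← Real.mul_rpow hb0.le hLb, mul_div_cancel₀ _ hb0.ne']
      _ ≤ b ^ α * Real.exp (L / b - 1) ^ α := by
          gcongr
          linarith [Real.add_one_le_exp (L / b - 1)]
      _ ≤ b ^ α * Real.exp (L - b) := by
          rw [← Real.exp_mul]
          gcongr
          calc (L / b - 1) * α ≤ (L / b - 1) * b := by gcongr
            _ = L - b := by field_simp
  have hexp : Real.exp (L - b) * Real.exp b = Real.exp L := by rw [← Real.exp_add, sub_add_cancel]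
  have hexpα : Real.exp α ≤ Real.exp (L - b) * Real.exp α := by
    nlinarith [Real.one_le_exp (by linarith : 0 ≤ L - b), Real.exp_pos α]
  calc L ^ α * (Real.exp b - Real.exp α)
      ≤ b ^ α * Real.exp (L - b) * (Real.exp b - Real.exp α) := by
        gcongr
        linarith [Real.exp_le_exp.2 hb]
    _ = b ^ α * (Real.exp L - Real.exp (L - b) * Real.exp α) := by rw [← hexp]; ring
    _ ≤ b ^ α * (Real.exp L - Real.exp α) := by gcongr

lemma mul_two_pow_le_pow_max_sub {E s : ℝ} (hE : 1 ≤ E) (hs : 0 ≤ s) (j : ℕ) :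
    s * 2 ^ j ≤ 2 * ((E + s + 2) ^ max 1 j - E) := by
  obtain ⟨n, hn⟩ : ∃ n, max 1 j = n + 1 := ⟨max 1 j - 1, by omega⟩
  have hj : (2 : ℝ) ^ j ≤ 2 * 2 ^ n := by
    rw [← pow_succ']; exact pow_le_pow_right₀ one_le_two (by omega)
  have h2n : (2 : ℝ) ^ n ≤ (E + s + 2) ^ n := pow_le_pow_left₀ zero_le_two (by linarith) n
  have h1n : (1 : ℝ) ≤ 2 ^ n := one_le_pow₀ one_le_two
  rw [hn, pow_succ']
  nlinarith [mul_le_mul_of_nonneg_left h2n (by linarith : (0 : ℝ) ≤ E + s + 2)]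

lemma min_two_le_log_rpow_mul {α s h : ℝ} (hα : 0 < α) (hs : 0 ≤ s) (hh : 0 ≤ h) (j : ℕ) :
    min 2 (s * (2 ^ j * h)) ≤
      2 * Real.log (Real.exp α + s + 2) ^ α * ((max 1 j : ℕ) : ℝ) ^ α *
        Real.log (Real.exp α + 1 / h) ^ (-α) := by
  set M := Real.log (Real.exp α + s + 2)
  set m : ℝ := ((max 1 j : ℕ) : ℝ)
  set L := Real.log (Real.exp α + 1 / h)
  have hαM : α < M := by
    rw [Real.lt_log_iff_exp_lt (by positivity)]; linarith
  have hαL : α ≤ L := by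
    rw [Real.le_log_iff_exp_le (by positivity)]; linarith [one_div_nonneg.2 hh]
  have hMm : α < M * m :=
    hαM.trans_le (le_mul_of_one_le_right (hα.trans hαM).le (by simp [m]))
  have hLα : 0 < L ^ α := Real.rpow_pos_of_pos (hα.trans_le hαL) α
  rw [Real.rpow_neg (hα.trans_le hαL).le, mul_assoc 2, ← Real.mul_rpow (hα.trans hαM).le
    (by positivity), ← div_eq_mul_inv, le_div_iff₀ hLα]
  rcases le_or_gt L (M * m) with hle | hlt
  · calc min 2 (s * (2 ^ j * h)) * L ^ α ≤ 2 * L ^ α := by gcongr; exact min_le_left _ _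
      _ ≤ 2 * (M * m) ^ α := by gcongr; exact (hα.trans_le hαL).le
  · have hh0 : 0 < h := by
      rcases hh.eq_or_lt with rfl | hpos
      · simp [L] at hlt; linarith
      · exact hpos
    have hexpL : Real.exp L - Real.exp α = 1 / h := by
      rw [Real.exp_log (by positivity)]; ring
    have hexpMm : Real.exp (M * m) = (Real.exp α + s + 2) ^ max 1 j := by
      rw [mul_comm, Real.exp_nat_mul, Real.exp_log (by positivity)]
    have hpow := mul_two_pow_le_pow_max_sub (Real.one_le_exp hα.le) hs j
    have hmono := rpow_mul_exp_sub_exp_le hα hMm.le hlt.le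
    rw [hexpMm, hexpL] at hmono
    calc min 2 (s * (2 ^ j * h)) * L ^ α ≤ s * (2 ^ j * h) * L ^ α := by
          gcongr; exact min_le_right _ _
      _ = h * (s * 2 ^ j) * L ^ α := by ring
      _ ≤ h * (2 * ((Real.exp α + s + 2) ^ max 1 j - Real.exp α)) * L ^ α := by gcongr
      _ = 2 * h * (L ^ α * ((Real.exp α + s + 2) ^ max 1 j - Real.exp α)) := by ring
      _ ≤ 2 * h * ((M * m) ^ α * (1 / h)) := by gcongr
      _ = 2 * (M * m) ^ α := by field_simp

lemma Real.add_rpow_le_two_rpow_mul_rpow_add_rpow {x y p : ℝ} (hx : 0 ≤ x) (hy : 0 ≤ y)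
    (hp : 0 ≤ p) : (x + y) ^ p ≤ 2 ^ p * (x ^ p + y ^ p) :=
  calc (x + y) ^ p ≤ (2 * max x y) ^ p := by
        gcongr; rw [two_mul]; exact add_le_add (le_max_left _ _) (le_max_right _ _)
    _ = 2 ^ p * max (x ^ p) (y ^ p) := by
        rw [Real.mul_rpow zero_le_two (le_max_of_le_left hx), Real.rpow_max hx hy hp]
    _ ≤ 2 ^ p * (x ^ p + y ^ p) := by
        gcongr; exact max_le_add_of_nonneg (by positivity) (by positivity)

lemma integrable_log_add_abs_rpow_mul_norm {g : ℝ → ℂ} {α c : ℝ} (hα : 0 ≤ α) (hc : 1 ≤ c)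
    (hg : Integrable g) (hint : Integrable fun u : ℝ => Real.log (1 + |u|) ^ α * ‖g u‖) :
    Integrable fun u : ℝ => Real.log (c + |u|) ^ α * ‖g u‖ := by
  refine ((hg.norm.const_mul (2 ^ α * Real.log c ^ α)).add (hint.const_mul (2 ^ α))).mono'
    ((by fun_prop : Measurable fun u : ℝ => Real.log (c + |u|) ^ α).aestronglyMeasurable.mul
      hg.norm.aestronglyMeasurable) (.of_forall fun u => ?_)
  have hc0 : 0 ≤ Real.log c := Real.log_nonneg hc
  have h1 : 0 ≤ Real.log (1 + |u|) := Real.log_nonneg (by linarith [abs_nonneg u])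
  -- `c + |u| ≤ c (1 + |u|)`
  have hlog : Real.log (c + |u|) ≤ Real.log c + Real.log (1 + |u|) := by
    rw [← Real.log_mul (by positivity) (by positivity)]
    exact Real.log_le_log (by positivity) (by nlinarith [abs_nonneg u])
  rw [norm_mul, norm_norm, Real.norm_of_nonneg (Real.rpow_nonneg
    (Real.log_nonneg (by linarith [abs_nonneg u])) α)]
  calc Real.log (c + |u|) ^ α * ‖g u‖
      ≤ (2 ^ α * (Real.log c ^ α + Real.log (1 + |u|) ^ α)) * ‖g u‖ := by
        gcongr
        exact (Real.rpow_le_rpow (Real.log_nonneg (by linarith [abs_nonneg u])) hlog hα).trans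
          (Real.add_rpow_le_two_rpow_mul_rpow_add_rpow hc0 h1 hα)
    _ = _ := by simp only [Pi.add_apply]; ring

lemma norm_invFourier_sub_le_log {g : ℝ → ℂ} {α : ℝ} (hα : 0 < α)
    (hint : Integrable fun u : ℝ => Real.log (1 + |u|) ^ α * ‖g u‖) (j : ℕ) {x y u v : ℝ}
    (huv : u - v = 2 ^ j * (x - y)) :
    ‖invFourier g u - invFourier g v‖ ≤
      ((1 / Real.pi) * ∫ t : ℝ, Real.log (Real.exp α + |t| + 2) ^ α * ‖g t‖) *
        ((max 1 j : ℕ) : ℝ) ^ α * Real.log (Real.exp α + 1 / |x - y|) ^ (-α) := by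
  have hlog : ∀ t : ℝ, 0 ≤ Real.log (Real.exp α + |t| + 2) :=
    fun t => Real.log_nonneg (by linarith [Real.one_le_exp hα.le, abs_nonneg t])
  have hL : 0 ≤ Real.log (Real.exp α + 1 / |x - y|) :=
    Real.log_nonneg (by linarith [Real.one_le_exp hα.le, one_div_nonneg.2 (abs_nonneg (x - y))])
  by_cases hg : Integrable g
  swap
  · rw [invFourier_eq_zero_of_not_integrable hg, invFourier_eq_zero_of_not_integrable hg,
      sub_zero, norm_zero]
    have : 0 ≤ ∫ t : ℝ, Real.log (Real.exp α + |t| + 2) ^ α * ‖g t‖ :=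
      integral_nonneg fun t => mul_nonneg (Real.rpow_nonneg (hlog t) α) (norm_nonneg (g t))
    positivity
  have hweight : Integrable fun t : ℝ => Real.log (Real.exp α + |t| + 2) ^ α * ‖g t‖ := by
    refine (integrable_log_add_abs_rpow_mul_norm (c := Real.exp α + 2) hα.le
      (by linarith [Real.one_le_exp hα.le]) hg hint).congr (.of_forall fun t => ?_)
    simp only [add_right_comm]
  have habs : |u - v| = 2 ^ j * |x - y| := by rw [huv, abs_mul, abs_of_pos (by positivity)]
  calc ‖invFourier g u - invFourier g v‖
      ≤ 1 / (2 * Real.pi) * ∫ t : ℝ, min 2 (|t| * (2 ^ j * |x - y|)) * ‖g t‖ := by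
        simpa only [habs] using norm_invFourier_sub_le hg u v
    _ ≤ 1 / (2 * Real.pi) * ∫ t : ℝ, (2 * ((max 1 j : ℕ) : ℝ) ^ α *
          Real.log (Real.exp α + 1 / |x - y|) ^ (-α)) *
          (Real.log (Real.exp α + |t| + 2) ^ α * ‖g t‖) := by
        refine mul_le_mul_of_nonneg_left ?_ (by positivity)
        refine integral_mono_of_nonneg (.of_forall fun t => by positivity)
          (hweight.const_mul _) (.of_forall fun t => ?_)
        have := min_two_le_log_rpow_mul hα (abs_nonneg t) (abs_nonneg (x - y)) j
        calc min 2 (|t| * (2 ^ j * |x - y|)) * ‖g t‖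
            ≤ (2 * Real.log (Real.exp α + |t| + 2) ^ α * ((max 1 j : ℕ) : ℝ) ^ α *
                Real.log (Real.exp α + 1 / |x - y|) ^ (-α)) * ‖g t‖ := by gcongr
          _ = _ := by ring
    _ = _ := by rw [integral_const_mul]; field_simp

section Lattice

variable {φ : ℝ → ℝ} {a : ℝ}

lemma nonneg_of_antitoneOn_of_eq_zero (hφ : AntitoneOn φ (Ici 0))
    (hsupp : ∀ t, a < t → φ t = 0) {t : ℝ} (ht : 0 ≤ t) : 0 ≤ φ t := by
  have hle := hφ ht (ht.trans (le_max_left t (a + 1))) (le_max_left t (a + 1))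
  rwa [hsupp _ ((lt_add_one a).trans_le (le_max_right t (a + 1)))] at hle

lemma summable_comp_abs_sub_int (hsupp : ∀ t, a < t → φ t = 0) (w : ℝ) :
    Summable fun k : ℤ => φ |w - k| := by
  refine summable_of_ne_finset_zero (s := Finset.Icc ⌈w - a⌉ ⌊w + a⌋) fun k hk => hsupp _ ?_
  rw [Finset.mem_Icc, not_and_or, not_le, not_le, Int.lt_ceil, Int.floor_lt] at hk
  rw [lt_abs]
  rcases hk with hk | hk
  · left; linarith
  · right; linarith

lemma summable_comp_add_nat (hsupp : ∀ t, a < t → φ t = 0) (c : ℝ) :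
    Summable fun i : ℕ => φ (c + i) := by
  refine summable_of_ne_finset_zero (s := Finset.range (⌈a - c⌉₊ + 1)) fun i hi => hsupp _ ?_
  rw [Finset.mem_range, not_lt, Nat.add_one_le_iff] at hi
  linarith [Nat.lt_of_ceil_lt hi]

lemma tsum_comp_add_nat_le {c : ℝ} (hφ : AntitoneOn φ (Ici c)) (hsupp : ∀ t, a < t → φ t = 0)
    (hca : c ≤ a) : ∑' i : ℕ, φ (c + i) ≤ φ c + ∫ t in c..a, φ t := by
  set N := ⌈a - c⌉₊
  have hN : a ≤ c + N := by linarith [Nat.le_ceil (a - c)]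
  have htail : ∀ i ∉ Finset.range N, φ (c + ↑(i + 1)) = 0 := fun i hi => by
    rw [Finset.mem_range, not_lt, Nat.ceil_le] at hi
    exact hsupp _ (by push_cast; linarith)
  have hint : ∀ {u v}, c ≤ u → u ≤ v → IntervalIntegrable φ volume u v := fun hu huv =>
    (hφ.mono (by rw [uIcc_of_le huv]; exact Icc_subset_Ici_iff huv |>.2 hu)).intervalIntegrable
  have hzero : ∫ t in a..c + N, φ t = 0 := intervalIntegral.integral_zero_ae (.of_forall
    fun t ht => hsupp t (by rw [uIoc_of_le hN] at ht; exact ht.1))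
  rw [(summable_comp_add_nat hsupp c).tsum_eq_zero_add, Nat.cast_zero, add_zero,
    tsum_eq_sum htail]
  gcongr
  calc ∑ i ∈ Finset.range N, φ (c + ↑(i + 1)) ≤ ∫ t in c..c + N, φ t :=
        AntitoneOn.sum_le_integral (hφ.mono Icc_subset_Ici_self)
    _ = ∫ t in c..a, φ t := by
        rw [← intervalIntegral.integral_add_adjacent_intervals (hint le_rfl hca)
          (hint hca hN), hzero, add_zero]

lemma tsum_comp_abs_sub_int_le (hφ : AntitoneOn φ (Ici 0)) (hsupp : ∀ t, a < t → φ t = 0)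
    (w : ℝ) :
    ∑' k : ℤ, φ |w - k| ≤ 3 * φ 0 + 2 * ∫ t in (1 / 2 : ℝ)..max (1 / 2) a, φ t := by
  set n := round w
  have hn : |w - n| ≤ 1 / 2 := abs_sub_round w
  have hmono : ∀ {s t}, 0 ≤ s → s ≤ t → φ t ≤ φ s := fun hs hst => hφ hs (hs.trans hst) hst
  set F : ℤ → ℝ := fun i => φ |w - (n + i : ℤ)|
  have hF : Summable F :=
    (summable_comp_abs_sub_int hsupp w).comp_injective (add_right_injective n)
  have hF₁ : Summable fun i : ℕ => F (i + 1) :=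
    hF.comp_injective (i := fun i : ℕ => (i : ℤ) + 1) fun i j h => by simpa using h
  have hF₂ : Summable fun i : ℕ => F (-(i + 1)) :=
    hF.comp_injective (i := fun i : ℕ => -((i : ℤ) + 1)) fun i j h => by simpa using h
  -- the integer `n + r` with `|r| = i + 1` is at distance at least `i + 1/2` from `w`
  have hfar : ∀ (i : ℕ) (r : ℤ), |(r : ℝ)| = i + 1 → F r ≤ φ (1 / 2 + i) := by
    intro i r hr
    refine hmono (by positivity) ?_
    simp only [Int.cast_add]
    rw [show w - (n + r) = -(r - (w - n)) by ring, abs_neg]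
    linarith [abs_sub_abs_le_abs_sub (r : ℝ) (w - n)]
  have hcenter : F 0 ≤ φ 0 := hmono le_rfl (abs_nonneg _)
  have hhalf : ∑' i : ℕ, φ (1 / 2 + i) ≤ φ 0 + ∫ t in (1 / 2 : ℝ)..max (1 / 2) a, φ t :=
    (tsum_comp_add_nat_le (hφ.mono (Ici_subset_Ici.2 (by norm_num)))
      (fun t ht => hsupp t ((le_max_right _ _).trans_lt ht)) (le_max_left _ _)).trans
      (by gcongr; exact hmono (by norm_num) (by norm_num))
  have hside : ∀ r : ℕ → ℤ, (∀ i, |(r i : ℝ)| = i + 1) → Summable (fun i => F (r i)) →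
      ∑' i : ℕ, F (r i) ≤ ∑' i : ℕ, φ (1 / 2 + i) := fun r hr hFr =>
    hFr.tsum_le_tsum (fun i => hfar i (r i) (hr i)) (summable_comp_add_nat hsupp _)
  rw [← (Equiv.addLeft n).tsum_eq, show (fun i => φ |w - ((Equiv.addLeft n) i : ℤ)|) = F from rfl,
    tsum_of_add_one_of_neg_add_one hF₁ hF₂]
  have h₁ := hside (fun i => i + 1) (fun i => by push_cast; exact abs_of_pos (by positivity)) hF₁
  have h₂ := hside (fun i => -(i + 1)) (fun i => by
    push_cast; rw [abs_neg]; exact abs_of_pos (by positivity)) hF₂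
  linarith

lemma tsum_comp_abs_sub_int_le_ite (hφ : AntitoneOn φ (Ici 0)) (hsupp : ∀ t, a < t → φ t = 0)
    (w : ℝ) :
    ∑' k : ℤ, φ |w - k| ≤
      if (1 : ℝ) / 2 < a then 3 * φ 0 + 4 * ∫ t in (1 / 2 : ℝ)..a, φ t else 3 * φ 0 := by
  refine (tsum_comp_abs_sub_int_le hφ hsupp w).trans ?_
  split_ifs with ha
  · have : 0 ≤ ∫ t in (1 / 2 : ℝ)..a, φ t := intervalIntegral.integral_nonneg ha.le
      fun t ht => nonneg_of_antitoneOn_of_eq_zero hφ hsupp (by linarith [ht.1])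
    rw [max_eq_right ha.le]
    linarith
  · rw [max_eq_left (not_lt.1 ha), intervalIntegral.integral_same, mul_zero, add_zero]

end Lattice

lemma le_rpow_mul_rpow_of_le_of_le {d X Y γ : ℝ} (hd : 0 ≤ d) (hX : d ≤ X) (hY : d ≤ Y)
    (hγ0 : 0 ≤ γ) (hγ1 : γ ≤ 1) : d ≤ X ^ (1 - γ) * Y ^ γ :=
  calc d = d ^ (1 - γ) * d ^ γ := by
        rw [← Real.rpow_add' hd (by norm_num), sub_add_cancel, Real.rpow_one]
    _ ≤ X ^ (1 - γ) * Y ^ γ := mul_le_mul (Real.rpow_le_rpow hd hX (by linarith))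
        (Real.rpow_le_rpow hd hY hγ0) (by positivity) (Real.rpow_nonneg (hd.trans hX) _)

lemma tsum_norm_sub_sub_int_le {ψ : ℝ → ℂ} {Φ : ℝ → ℝ} {a γ B X Y : ℝ} (hΦ : AntitoneOn Φ (Ici 0))
    (hdom : ∀ x, ‖ψ x‖ ≤ Φ |x|) (hsupp : ∀ t, a < t → Φ t = 0) (hγ0 : 0 < γ) (hγ1 : γ ≤ 1)
    (hB : ∀ k : ℤ, ‖ψ (X - k) - ψ (Y - k)‖ ≤ B) :
    ∑' k : ℤ, ‖ψ (X - k) - ψ (Y - k)‖ ≤ B ^ (1 - γ) * (2 *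
      if (1 : ℝ) / 2 < a then 3 * Φ 0 ^ γ + 4 * ∫ t in (1 / 2 : ℝ)..a, Φ t ^ γ
      else 3 * Φ 0 ^ γ) := by
  have hΦ0 : ∀ t, 0 ≤ t → 0 ≤ Φ t := fun t ht =>
    (norm_nonneg _).trans (abs_of_nonneg ht ▸ hdom t)
  have hφ : AntitoneOn (fun t => Φ t ^ γ) (Ici 0) := fun s hs t ht hst =>
    Real.rpow_le_rpow (hΦ0 t ht) (hΦ hs ht hst) hγ0.le
  have hφsupp : ∀ t, a < t → Φ t ^ γ = 0 := fun t ht => by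
    rw [hsupp t ht, Real.zero_rpow hγ0.ne']
  have hB0 : 0 ≤ B := (norm_nonneg _).trans (hB 0)
  have hcrude : ∀ k : ℤ, ‖ψ (X - k) - ψ (Y - k)‖ ≤ Φ |X - k| + Φ |Y - k| := fun k =>
    (norm_sub_le _ _).trans (add_le_add (hdom _) (hdom _))
  have hterm : ∀ k : ℤ, ‖ψ (X - k) - ψ (Y - k)‖ ≤ B ^ (1 - γ) * (Φ |X - k| ^ γ + Φ |Y - k| ^ γ) :=
    fun k => calc ‖ψ (X - k) - ψ (Y - k)‖ ≤ B ^ (1 - γ) * (Φ |X - k| + Φ |Y - k|) ^ γ :=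
          le_rpow_mul_rpow_of_le_of_le (norm_nonneg _) (hB k) (hcrude k) hγ0.le hγ1
      _ ≤ B ^ (1 - γ) * (Φ |X - k| ^ γ + Φ |Y - k| ^ γ) := by
          gcongr
          exact Real.rpow_add_le_add_rpow (hΦ0 _ (abs_nonneg _)) (hΦ0 _ (abs_nonneg _)) hγ0.le hγ1
  have hsX := summable_comp_abs_sub_int hφsupp X
  have hsY := summable_comp_abs_sub_int hφsupp Y
  have hsum : Summable fun k : ℤ => ‖ψ (X - k) - ψ (Y - k)‖ :=
    .of_nonneg_of_le (fun _ => norm_nonneg _) hcrude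
      ((summable_comp_abs_sub_int hsupp X).add (summable_comp_abs_sub_int hsupp Y))
  calc ∑' k : ℤ, ‖ψ (X - k) - ψ (Y - k)‖
      ≤ ∑' k : ℤ, B ^ (1 - γ) * (Φ |X - k| ^ γ + Φ |Y - k| ^ γ) :=
        hsum.tsum_le_tsum hterm ((hsX.add hsY).mul_left _)
    _ = B ^ (1 - γ) * (∑' k : ℤ, Φ |X - k| ^ γ + ∑' k : ℤ, Φ |Y - k| ^ γ) := by
        rw [tsum_mul_left, hsX.tsum_add hsY]
    _ ≤ _ := by
        rw [two_mul]
        gcongr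
        · exact tsum_comp_abs_sub_int_le_ite hφ hφsupp X
        · exact tsum_comp_abs_sub_int_le_ite hφ hφsupp Y

lemma norm_scaledW_sub (ψ : ℝ → ℂ) (j : ℕ) (k : ℤ) (x y : ℝ) :
    ‖scaledW ψ j k x - scaledW ψ j k y‖ =
      2 ^ ((j : ℝ) / 2) * ‖ψ (2 ^ j * x - k) - ψ (2 ^ j * y - k)‖ := by
  rw [scaledW, scaledW, ← mul_sub, norm_mul, Complex.norm_real, Real.norm_of_nonneg (by positivity)]

lemma two_rpow_mul_rpow_one_sub_mul {R L C α γ : ℝ} (hR : 0 ≤ R) (hL : 0 ≤ L) (hα : 0 < α)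
    (hγ : γ < 1) (j : ℕ) :
    2 ^ ((j : ℝ) / 2) * ((R * ((max 1 j : ℕ) : ℝ) ^ α * L ^ (-α)) ^ (1 - γ) * (2 * C)) =
      2 ^ ((j : ℝ) / 2 + 1) * R ^ (1 - γ) * C * max 1 ((j : ℝ) ^ (α * (1 - γ))) *
        L ^ (-(α * (1 - γ))) := by
  have hm : ((max 1 j : ℕ) : ℝ) ^ (α * (1 - γ)) = max 1 ((j : ℝ) ^ (α * (1 - γ))) := by
    rw [Nat.cast_max, Nat.cast_one, Real.rpow_max zero_le_one j.cast_nonneg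
      (by nlinarith), Real.one_rpow]
  rw [Real.mul_rpow (by positivity) (by positivity), Real.mul_rpow hR (by positivity),
    ← Real.rpow_mul (by positivity), ← Real.rpow_mul hL, hm, Real.rpow_add two_pos,
    Real.rpow_one, neg_mul]
  ring

theorem scaled_wavelet_increment_sum_bound_general (ψ g : ℝ → ℂ)
    (Φψ : ℝ → ℝ) (a : ℝ)
    (hΦ_anti : AntitoneOn Φψ (Set.Ici 0))
    (hdom : ∀ x : ℝ, ‖ψ x‖ ≤ Φψ |x|)
    (hsupp : ∀ x : ℝ, a < x → Φψ x = 0)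
    (hrep : ∀ x : ℝ, ψ x =
      ((1 / (2 * Real.pi) : ℝ) : ℂ) * ∫ u : ℝ, Complex.exp (Complex.I * u * x) * g u)
    (α : ℝ) (hα : 0 < α)
    (hint : Integrable (fun u : ℝ => (Real.log (1 + |u|)) ^ α * ‖g u‖)) :
    ∀ (γ : ℝ), 0 < γ → γ < 1 → ∀ (x y : ℝ) (j : ℕ),
      (∑' k : ℤ, ‖scaledW ψ j k x - scaledW ψ j k y‖) ≤
        (2 : ℝ) ^ ((j : ℝ) / 2 + 1) *
          ((1 / Real.pi) * ∫ u : ℝ, (Real.log (Real.exp α + |u| + 2)) ^ α * ‖g u‖) ^ (1 - γ) *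
          (if (1 : ℝ) / 2 < a then
            3 * Φψ 0 ^ γ + 4 * ∫ t in (1 / 2 : ℝ)..a, Φψ t ^ γ
          else 3 * Φψ 0 ^ γ) *
          max 1 ((j : ℝ) ^ (α * (1 - γ))) *
          (Real.log (Real.exp α + 1 / |x - y|)) ^ (-(α * (1 - γ))) := by
  intro γ hγ0 hγ1 x y j
  obtain rfl : ψ = invFourier g := funext hrep
  have hR : 0 ≤ (1 / Real.pi) * ∫ u : ℝ, (Real.log (Real.exp α + |u| + 2)) ^ α * ‖g u‖ :=
    mul_nonneg (by positivity) (integral_nonneg fun u => mul_nonneg (Real.rpow_nonneg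
      (Real.log_nonneg (by linarith [Real.one_le_exp hα.le, abs_nonneg u])) α) (norm_nonneg _))
  have hL : 0 ≤ Real.log (Real.exp α + 1 / |x - y|) :=
    Real.log_nonneg (by linarith [Real.one_le_exp hα.le, one_div_nonneg.2 (abs_nonneg (x - y))])
  calc ∑' k : ℤ, ‖scaledW (invFourier g) j k x - scaledW (invFourier g) j k y‖
      = 2 ^ ((j : ℝ) / 2) *
          ∑' k : ℤ, ‖invFourier g (2 ^ j * x - k) - invFourier g (2 ^ j * y - k)‖ := by
        simp_rw [norm_scaledW_sub]; exact tsum_mul_left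
    _ ≤ _ := by
        gcongr
        exact tsum_norm_sub_sub_int_le hΦ_anti hdom hsupp hγ0 hγ1.le
          fun k => norm_invFourier_sub_le_log hα hint j (by ring)
    _ = _ := two_rpow_mul_rpow_one_sub_mul hR hL hα hγ1 j

/-- Combined lattice bound for wavelet increments:
`Σ_{k∈ℤ} |ψ_{jk}(x) − ψ_{jk}(y)| ≤ 2^{j/2+1} R_α^{1−γ} L_γ max(1, j^{α(1−γ)})
ln^{−α(1−γ)}(e^α + 1/|x−y|)`, where `L_γ` is the constant of the lattice-sum lemma
(two cases depending on whether `â > 1/2` or `â < 1/2`). -/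
theorem scaled_wavelet_increment_sum_bound (ψ g : ℝ → ℂ)
    (Φψ : ℝ → ℝ) (a : ℝ) (ha : 0 ≤ a)
    (hΦ_anti : AntitoneOn Φψ (Set.Ici 0))
    (hdom : ∀ x : ℝ, ‖ψ x‖ ≤ Φψ |x|)
    (hsupp : ∀ x : ℝ, a < x → Φψ x = 0)
    (hrep : ∀ x : ℝ, ψ x =
      ((1 / (2 * Real.pi) : ℝ) : ℂ) * ∫ u : ℝ, Complex.exp (Complex.I * u * x) * g u)
    (α : ℝ) (hα : 0 < α)
    (hint : Integrable (fun u : ℝ => (Real.log (1 + |u|)) ^ α * ‖g u‖)) :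
    ∀ (γ : ℝ), 0 < γ → γ < 1 → ∀ (x y : ℝ) (j : ℕ),
      (∑' k : ℤ, ‖scaledW ψ j k x - scaledW ψ j k y‖) ≤
        (2 : ℝ) ^ ((j : ℝ) / 2 + 1) *
          ((1 / Real.pi) * ∫ u : ℝ, (Real.log (Real.exp α + |u| + 2)) ^ α * ‖g u‖) ^ (1 - γ) *
          (if (1 : ℝ) / 2 < a then
            3 * Φψ 0 ^ γ + 4 * ∫ t in (1 / 2 : ℝ)..a, Φψ t ^ γ
          else 3 * Φψ 0 ^ γ) *
          max 1 ((j : ℝ) ^ (α * (1 - γ))) *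
          (Real.log (Real.exp α + 1 / |x - y|)) ^ (-(α * (1 - γ))) :=
  scaled_wavelet_increment_sum_bound_general ψ g Φψ a hΦ_anti hdom hsupp hrep α hα hint
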